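/- Let C = {(ρ_m, D_m)} be a code for which the compound-channel error satisfies P_err(C, σ^{⊗ℓ}) ≤ ε for every state σ on J. Assume the de Finetti bound: every permutation-invariant state ζ' on J^{⊗ℓ} satisfies ζ' ≤ (ℓ+1)^{|J|²} ∫ μ(dσ) σ^{⊗ℓ} for some probability measure μ on states of J. Then the permuted random code C_π = {(U^π ρ_m U^{π†}, U^π D_m U^{π†})} with uniformly random π ∈ S_ℓ satisfies, for every state ζ on J^{⊗ℓ}, E_π P_err(C_π, ζ) ≤ (ℓ+1)^{|J|²} ε. -/

import Mathlib

open Matrix MeasureTheory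
open scoped BigOperators Classical ComplexOrder

noncomputable section

/-- A (density) state: positive semidefinite with unit trace. -/
def IsState {n : Type*} [Fintype n] (ρ : Matrix n n ℂ) : Prop :=
  ρ.PosSemidef ∧ ρ.trace = 1

/-- Choi matrix of a linear map on matrices. -/
def choiMat {ι κ : Type*} [DecidableEq ι]
    (N : Matrix ι ι ℂ → Matrix κ κ ℂ) : Matrix (ι × κ) (ι × κ) ℂ :=
  Matrix.of fun p q => N (Matrix.single p.1 q.1 1) p.2 q.2

/-- Completely positive: linear with positive semidefinite Choi matrix. -/
def IsCP {ι κ : Type*} [DecidableEq ι] [Fintype ι] [Fintype κ]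
    (N : Matrix ι ι ℂ → Matrix κ κ ℂ) : Prop :=
  IsLinearMap ℂ N ∧ (choiMat N).PosSemidef

/-- Completely positive and trace preserving. -/
def IsCPTP {ι κ : Type*} [DecidableEq ι] [Fintype ι] [Fintype κ]
    (N : Matrix ι ι ℂ → Matrix κ κ ℂ) : Prop :=
  IsCP N ∧ ∀ X, (N X).trace = X.trace

/-- The ℓ-fold tensor power `N^{⊗ℓ}` of a linear map on matrices, written out
in matrix elements (for linear `N` this is the usual tensor power). -/
def tpow {ι κ : Type*} [Fintype ι] [DecidableEq ι]
    (N : Matrix ι ι ℂ → Matrix κ κ ℂ) (ℓ : ℕ) :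
    Matrix (Fin ℓ → ι) (Fin ℓ → ι) ℂ → Matrix (Fin ℓ → κ) (Fin ℓ → κ) ℂ :=
  fun X => Matrix.of fun y y' => ∑ x : Fin ℓ → ι, ∑ x' : Fin ℓ → ι,
    X x x' * ∏ i, N (Matrix.single (x i) (x' i) 1) (y i) (y' i)

/-- The tensor product `ρ ⊗ σ` of operators on `A^{⊗ℓ}` and `J^{⊗ℓ}`, viewed as an
operator on `(A⊗J)^{⊗ℓ}`. -/
def pairState {a j : Type*} {ℓ : ℕ}
    (ρ : Matrix (Fin ℓ → a) (Fin ℓ → a) ℂ) (σ : Matrix (Fin ℓ → j) (Fin ℓ → j) ℂ) :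
    Matrix (Fin ℓ → a × j) (Fin ℓ → a × j) ℂ :=
  Matrix.of fun u v =>
    ρ (fun i => (u i).1) (fun i => (v i).1) * σ (fun i => (u i).2) (fun i => (v i).2)

/-- Average error probability of the code `{(ρ_m, D_m)}` against jammer state `σ`:
`(1/M) ∑_m Tr[(N^{⊗ℓ}(ρ_m ⊗ σ))(1 − D_m)]`. -/
def Perr {a j b : Type*} [Fintype a] [DecidableEq a] [Fintype j] [DecidableEq j] [Fintype b]
    (N : Matrix (a × j) (a × j) ℂ → Matrix b b ℂ) (ℓ M : ℕ)
    (ρ : Fin M → Matrix (Fin ℓ → a) (Fin ℓ → a) ℂ)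
    (D : Fin M → Matrix (Fin ℓ → b) (Fin ℓ → b) ℂ)
    (σ : Matrix (Fin ℓ → j) (Fin ℓ → j) ℂ) : ℝ :=
  (M : ℝ)⁻¹ * ∑ m, ((tpow N ℓ (pairState (ρ m) σ) * (1 - D m)).trace).re

/-- Hilbert–Schmidt adjoint (Heisenberg picture) of a map on matrices. -/
def hsAdjoint {ι κ : Type*} [DecidableEq ι] [Fintype κ]
    (N : Matrix ι ι ℂ → Matrix κ κ ℂ) : Matrix κ κ ℂ → Matrix ι ι ℂ :=
  fun Y => Matrix.of fun x x' => ((N (Matrix.single x x' 1))ᴴ * Y).trace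

/-- The unitary `U^π` permuting the tensor factors of `H^{⊗ℓ}`:
`U^π e_α = e_{α ∘ π⁻¹}`. -/
def permU (ι : Type*) [DecidableEq ι] (ℓ : ℕ) (π : Equiv.Perm (Fin ℓ)) :
    Matrix (Fin ℓ → ι) (Fin ℓ → ι) ℂ :=
  Matrix.of fun v w => if v = (fun i => w (π.symm i)) then 1 else 0

/-- The i.i.d. (tensor power) state `σ^{⊗ℓ}`. -/
def iidState {j : Type*} (ℓ : ℕ) (σ : Matrix j j ℂ) :
    Matrix (Fin ℓ → j) (Fin ℓ → j) ℂ :=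
  Matrix.of fun u v => ∏ i, σ (u i) (v i)

/-- Binary relative entropy `D(u‖v)` (natural logarithm). -/
def Dkl (u v : ℝ) : ℝ :=
  u * Real.log (u / v) + (1 - u) * Real.log ((1 - u) / (1 - v))

/-- Trace norm of a square complex matrix: `Tr √(MᴴM)`. -/
def traceNorm {α : Type*} [Fintype α] [DecidableEq α] (M : Matrix α α ℂ) : ℝ :=
  (((Matrix.posSemidef_conjTranspose_mul_self M).1.eigenvectorUnitary.1 *
      Matrix.diagonal (((↑) : ℝ → ℂ) ∘ (Real.sqrt ∘ (Matrix.posSemidef_conjTranspose_mul_self M).1.eigenvalues)) *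
      (star (Matrix.posSemidef_conjTranspose_mul_self M).1.eigenvectorUnitary : Matrix α α ℂ)).trace).re

/-- Tensoring a map on matrices with the identity on `ℂ^k` (matrix elements). -/
def tensorId {α β : Type*} [Fintype α] [DecidableEq α]
    (T : Matrix α α ℂ → Matrix β β ℂ) (k : ℕ) :
    Matrix (α × Fin k) (α × Fin k) ℂ → Matrix (β × Fin k) (β × Fin k) ℂ :=
  fun X => Matrix.of fun p q => ∑ x : α, ∑ x' : α,
    X (x, p.2) (x', q.2) * T (Matrix.single x x' 1) p.1 q.1

/-- Diamond norm (completely bounded trace norm) of a map on matrices. -/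
def dnorm {α β : Type*} [Fintype α] [DecidableEq α] [Fintype β] [DecidableEq β]
    (T : Matrix α α ℂ → Matrix β β ℂ) : ℝ :=
  ⨆ k : ℕ, ⨆ X : {X : Matrix (α × Fin (k+1)) (α × Fin (k+1)) ℂ // traceNorm X ≤ 1},
    traceNorm (tensorId T (k+1) X.1)

instance matrixMeasurableSpace {m n : Type*} : MeasurableSpace (Matrix m n ℂ) :=
  inferInstanceAs (MeasurableSpace (m → n → ℂ))

section Aux

open scoped MatrixOrder Matrix.Norms.L2Operator in
lemma psd_exists_mul_self {n : Type*} [Fintype n] {A : Matrix n n ℂ}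
    (hA : A.PosSemidef) : ∃ B : Matrix n n ℂ, A = Bᴴ * B := by
  classical
  obtain ⟨B, hB⟩ := CStarAlgebra.nonneg_iff_eq_star_mul_self.mp hA.nonneg
  exact ⟨B, hB⟩

/-- Schur product theorem. -/
lemma psd_entry_mul {n : Type*} [Fintype n] {A B : Matrix n n ℂ}
    (hA : A.PosSemidef) (hB : B.PosSemidef) :
    (Matrix.of fun p q => A p q * B p q).PosSemidef := by
  obtain ⟨P, rfl⟩ := psd_exists_mul_self hA
  obtain ⟨Q, rfl⟩ := psd_exists_mul_self hB
  have key : (Matrix.of fun p q => (Pᴴ * P) p q * (Qᴴ * Q) p q)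
      = (Matrix.of fun (s : n × n) (q : n) => P s.1 q * Q s.2 q)ᴴ
        * (Matrix.of fun (s : n × n) (q : n) => P s.1 q * Q s.2 q) := by
    ext p q
    simp only [Matrix.of_apply, Matrix.mul_apply, Matrix.conjTranspose_apply,
      Fintype.sum_prod_type, Finset.sum_mul_sum, star_mul']
    refine Finset.sum_congr rfl fun u _ => Finset.sum_congr rfl fun v _ => ?_
    ring
  rw [key]
  exact Matrix.posSemidef_conjTranspose_mul_self _

/-- All-ones matrix is PSD. -/
lemma psd_ones {n : Type*} [Fintype n] :
    (Matrix.of fun _ _ : n => (1 : ℂ)).PosSemidef := by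
  have key : (Matrix.of fun _ _ : n => (1 : ℂ))
      = (Matrix.of fun (_ : Unit) (_ : n) => (1 : ℂ))ᴴ
        * (Matrix.of fun (_ : Unit) (_ : n) => (1 : ℂ)) := by
    ext p q
    simp [Matrix.mul_apply]
  rw [key]
  exact Matrix.posSemidef_conjTranspose_mul_self _

lemma psd_entry_prod {I n : Type*} [Fintype n] (s : Finset I)
    (A : I → Matrix n n ℂ) (hA : ∀ i, (A i).PosSemidef) :
    (Matrix.of fun p q => ∏ i ∈ s, A i p q).PosSemidef := by
  classical
  induction s using Finset.induction with
  | empty => simpa using psd_ones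
  | @insert i s hi ih =>
      have h2 := psd_entry_mul (hA i) ih
      have he : (Matrix.of fun p q => ∏ k ∈ insert i s, A k p q)
          = Matrix.of fun p q => A i p q * (Matrix.of fun p q => ∏ k ∈ s, A k p q) p q := by
        ext p q; simp [Finset.prod_insert hi]
      rw [he]; exact h2

/-- Sums of PSD matrices are PSD. -/
lemma psd_sum {I n : Type*} [Fintype n] (s : Finset I) (f : I → Matrix n n ℂ)
    (hf : ∀ i ∈ s, (f i).PosSemidef) : (∑ i ∈ s, f i).PosSemidef := by
  classical
  induction s using Finset.induction with
  | empty => simpa using Matrix.PosSemidef.zero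
  | @insert i s hi ih =>
      rw [Finset.sum_insert hi]
      exact ((hf i (Finset.mem_insert_self i s)).add
        (ih fun k hk => hf k (Finset.mem_insert_of_mem hk)))

/-- Nonnegative real multiples of PSD matrices are PSD. -/
lemma psd_csmul {n : Type*} [Fintype n] {M : Matrix n n ℂ} (hM : M.PosSemidef)
    {c : ℝ} (hc : 0 ≤ c) : ((c : ℂ) • M).PosSemidef := by
  constructor
  · have h := hM.1
    unfold Matrix.IsHermitian at h ⊢
    rw [Matrix.conjTranspose_smul, h]
    congr 1
    simp
  · intro x
    exact (hM.smul (a := (c : ℂ)) (by exact_mod_cast hc)).2 x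

/-- The real part of the trace of a PSD matrix is nonnegative. -/
lemma psd_trace_re_nonneg {n : Type*} [Fintype n] [DecidableEq n] {P : Matrix n n ℂ}
    (hP : P.PosSemidef) : 0 ≤ P.trace.re := by
  rw [Matrix.trace]
  have h : ∀ i, 0 ≤ (P i i).re := by
    intro i
    have := hP.re_dotProduct_nonneg (Pi.single i 1)
    simpa [dotProduct, Matrix.mulVec, Pi.single_apply, Finset.sum_ite_eq] using this
  calc (0:ℝ) ≤ ∑ i, (P i i).re := Finset.sum_nonneg fun i _ => h i
    _ = (∑ i, P i i).re := by rw [Complex.re_sum]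
    _ = _ := by simp [Matrix.diag]

/-- Re Tr(P E) ≥ 0 for PSD P, E. -/
lemma psd_trace_mul_re_nonneg {n : Type*} [Fintype n] [DecidableEq n]
    {P E : Matrix n n ℂ} (hP : P.PosSemidef) (hE : E.PosSemidef) :
    0 ≤ ((P * E).trace).re := by
  obtain ⟨A, rfl⟩ := psd_exists_mul_self hP
  have : (Aᴴ * A * E).trace = (A * E * Aᴴ).trace := by
    rw [Matrix.mul_assoc, Matrix.trace_mul_comm]
  rw [this]
  exact psd_trace_re_nonneg (hE.mul_mul_conjTranspose_same A)
  

/-- Kernel positivity: a PSD "Choi kernel" maps PSD matrices to PSD matrices. -/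
lemma kernel_psd {ι κ : Type*} [Fintype ι] [Fintype κ] [DecidableEq κ]
    {K : Matrix (ι × κ) (ι × κ) ℂ} (hK : K.PosSemidef)
    {X : Matrix ι ι ℂ} (hX : X.PosSemidef) :
    (Matrix.of fun y y' : κ => ∑ x : ι, ∑ x' : ι, X x x' * K (x, y) (x', y')).PosSemidef := by
  set W : Matrix (ι × κ) (ι × κ) ℂ := Matrix.of fun p q => X p.1 q.1 * K p q with hW
  have hWpsd : W.PosSemidef := psd_entry_mul (hX.submatrix Prod.fst) hK
  set V : Matrix (ι × κ) κ ℂ := Matrix.of fun p y => if p.2 = y then 1 else 0 with hV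
  have key : (Matrix.of fun y y' : κ => ∑ x : ι, ∑ x' : ι, X x x' * K (x, y) (x', y'))
      = Vᴴ * W * V := by
    ext y y'
    rw [Matrix.mul_apply]
    simp only [Matrix.mul_apply, Matrix.conjTranspose_apply, Matrix.of_apply,
      Fintype.sum_prod_type, hV, hW]
    simp only [apply_ite (star : ℂ → ℂ), star_one, star_zero, ite_mul, one_mul, zero_mul,
      mul_ite, mul_one, mul_zero, Finset.sum_ite_eq, Finset.sum_ite_eq',
      Finset.mem_univ, if_true, Matrix.of_apply]
    rw [Finset.sum_comm]
  rw [key]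
  exact hWpsd.conjTranspose_mul_mul_same V

/-- Entries of a PSD matrix with trace 1 have norm at most 1. -/
lemma state_entry_norm_le_one {n : Type*} [Fintype n] [DecidableEq n]
    {σ : Matrix n n ℂ} (h1 : σ.PosSemidef) (h2 : σ.trace = 1) (u v : n) :
    ‖σ u v‖ ≤ 1 := by
  obtain ⟨B, hB⟩ := psd_exists_mul_self h1
  have hdiag : ∀ w, (σ w w).re = ∑ s, ‖B s w‖ ^ 2 := by
    intro w
    rw [hB]
    simp only [Matrix.mul_apply, Matrix.conjTranspose_apply, Complex.star_def]
    rw [Complex.re_sum]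
    refine Finset.sum_congr rfl fun s _ => ?_
    rw [RCLike.conj_mul]
    norm_cast
  have hdle : ∀ w, (σ w w).re ≤ 1 := by
    intro w
    have htr : ∑ i, (σ i i).re = 1 := by
      have := congrArg Complex.re h2
      rw [Matrix.trace] at this
      simpa [Complex.re_sum, Matrix.diag] using this
    calc (σ w w).re ≤ ∑ i, (σ i i).re := by
          refine Finset.single_le_sum (f := fun i => (σ i i).re) (fun i _ => ?_) (Finset.mem_univ w)
          show 0 ≤ (σ i i).re; rw [hdiag i]; positivity
      _ = 1 := htr
  set x : EuclideanSpace ℂ n := WithLp.toLp 2 (fun s => B s u) with hx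
  set y : EuclideanSpace ℂ n := WithLp.toLp 2 (fun s => B s v) with hy
  have hinner : σ u v = inner ℂ x y := by
    rw [hB]
    simp only [Matrix.mul_apply, Matrix.conjTranspose_apply, Complex.star_def]
    rw [PiLp.inner_apply]
    refine Finset.sum_congr rfl fun s _ => ?_
    simp [hx, hy, RCLike.inner_apply, mul_comm]
  have hnorm : ∀ (z : EuclideanSpace ℂ n) (w : n), z = WithLp.toLp 2 (fun s => B s w) →
      ‖z‖ ≤ 1 := by
    intro z w hz
    have h1' : ‖z‖ = Real.sqrt ((σ w w).re) := by
      rw [EuclideanSpace.norm_eq, hdiag w, hz]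
    rw [h1']
    calc Real.sqrt ((σ w w).re) ≤ Real.sqrt 1 := Real.sqrt_le_sqrt (hdle w)
      _ = 1 := Real.sqrt_one
  calc ‖σ u v‖ = ‖(inner ℂ x y : ℂ)‖ := by rw [hinner]
    _ ≤ ‖x‖ * ‖y‖ := norm_inner_le_norm x y
    _ ≤ 1 * 1 := by
        exact mul_le_mul (hnorm x u hx) (hnorm y v hy) (norm_nonneg y) zero_le_one
    _ = 1 := by ring
/-- Precomposition equivalence. -/
def preE {ι : Type*} {ℓ : ℕ} (π : Equiv.Perm (Fin ℓ)) : (Fin ℓ → ι) ≃ (Fin ℓ → ι) where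
  toFun f := fun i => f (π i)
  invFun f := fun i => f (π.symm i)
  left_inv f := by funext i; simp
  right_inv f := by funext i; simp

lemma permU_mul_apply {ι : Type*} [DecidableEq ι] [Fintype ι] {ℓ : ℕ}
    (π : Equiv.Perm (Fin ℓ)) (X : Matrix (Fin ℓ → ι) (Fin ℓ → ι) ℂ)
    (v w : Fin ℓ → ι) :
    (permU ι ℓ π * X) v w = X (fun i => v (π i)) w := by
  rw [Matrix.mul_apply]
  rw [Finset.sum_eq_single (fun i => v (π i))]
  · simp [permU]
  · intro u _ hu
    have : ¬ (v = fun i => u (π.symm i)) := by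
      intro h
      apply hu
      funext i
      have := congrFun h (π i)
      simpa using this.symm
    simp [permU, this]
  · intro h; exact absurd (Finset.mem_univ _) h

lemma mul_permU_conjT_apply {ι : Type*} [DecidableEq ι] [Fintype ι] {ℓ : ℕ}
    (π : Equiv.Perm (Fin ℓ)) (X : Matrix (Fin ℓ → ι) (Fin ℓ → ι) ℂ)
    (v w : Fin ℓ → ι) :
    (X * (permU ι ℓ π)ᴴ) v w = X v (fun i => w (π i)) := by
  rw [Matrix.mul_apply]
  rw [Finset.sum_eq_single (fun i => w (π i))]
  · simp [permU, Matrix.conjTranspose_apply]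
  · intro u _ hu
    have : ¬ (w = fun i => u (π.symm i)) := by
      intro h
      apply hu
      funext i
      have := congrFun h (π i)
      simpa using this.symm
    simp [permU, Matrix.conjTranspose_apply, this]
  · intro h; exact absurd (Finset.mem_univ _) h

/-- Conjugation by the permutation unitary is precomposition reindexing. -/
lemma permU_conj {ι : Type*} [DecidableEq ι] [Fintype ι] {ℓ : ℕ}
    (π : Equiv.Perm (Fin ℓ)) (X : Matrix (Fin ℓ → ι) (Fin ℓ → ι) ℂ) :
    permU ι ℓ π * X * (permU ι ℓ π)ᴴ
      = Matrix.of fun v w => X (fun i => v (π i)) (fun i => w (π i)) := by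
  ext v w
  rw [Matrix.mul_assoc]
  rw [show permU ι ℓ π * (X * (permU ι ℓ π)ᴴ) = permU ι ℓ π * (X * (permU ι ℓ π)ᴴ) from rfl]
  rw [permU_mul_apply π (X * (permU ι ℓ π)ᴴ) v w, mul_permU_conjT_apply]
  rfl
def splitE (a j : Type*) (ℓ : ℕ) : ((Fin ℓ → a) × (Fin ℓ → j)) ≃ (Fin ℓ → a × j) where
  toFun z := fun i => (z.1 i, z.2 i)
  invFun x := (fun i => (x i).1, fun i => (x i).2)
  left_inv z := rfl
  right_inv x := rfl

lemma sum_split {a j : Type*} [Fintype a] [Fintype j] {ℓ : ℕ} (f : (Fin ℓ → a × j) → ℂ) :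
    ∑ x, f x = ∑ xa : Fin ℓ → a, ∑ p : Fin ℓ → j, f (fun i => (xa i, p i)) := by
  rw [← Equiv.sum_comp (splitE a j ℓ) f, Fintype.sum_prod_type]
  rfl

variable {a j b : Type} [Fintype a] [DecidableEq a] [Fintype j] [DecidableEq j]
  [Fintype b]

/-- Coefficients of the error functional as a linear form in the jammer state. -/
def Gm (N : Matrix (a × j) (a × j) ℂ → Matrix b b ℂ) (ℓ M : ℕ)
    (ρ : Fin M → Matrix (Fin ℓ → a) (Fin ℓ → a) ℂ)
    (D : Fin M → Matrix (Fin ℓ → b) (Fin ℓ → b) ℂ)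
    (p q : Fin ℓ → j) : ℂ :=
  ∑ m, ∑ y : Fin ℓ → b, ∑ y' : Fin ℓ → b, ∑ xa : Fin ℓ → a, ∑ xa' : Fin ℓ → a,
    ρ m xa xa' * (∏ i, N (Matrix.single (xa i, p i) (xa' i, q i) 1) (y i) (y' i))
      * (1 - D m) y' y

lemma Fc_eq (N : Matrix (a × j) (a × j) ℂ → Matrix b b ℂ) (ℓ M : ℕ)
    (ρ : Fin M → Matrix (Fin ℓ → a) (Fin ℓ → a) ℂ)
    (D : Fin M → Matrix (Fin ℓ → b) (Fin ℓ → b) ℂ)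
    (σ : Matrix (Fin ℓ → j) (Fin ℓ → j) ℂ) :
    ∑ m, ((tpow N ℓ (pairState (ρ m) σ) * (1 - D m)).trace)
      = ∑ p : Fin ℓ → j, ∑ q : Fin ℓ → j, σ p q * Gm N ℓ M ρ D p q := by
  have htr : ∀ m, ((tpow N ℓ (pairState (ρ m) σ) * (1 - D m)).trace)
      = ∑ y : Fin ℓ → b, ∑ y' : Fin ℓ → b, ∑ xa : Fin ℓ → a, ∑ p : Fin ℓ → j,
          ∑ xa' : Fin ℓ → a, ∑ q : Fin ℓ → j,
          ρ m xa xa' * σ p q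
            * (∏ i, N (Matrix.single (xa i, p i) (xa' i, q i) 1) (y i) (y' i))
            * (1 - D m) y' y := by
    intro m
    rw [Matrix.trace]
    simp only [Matrix.diag_apply, Matrix.mul_apply, tpow, pairState, Matrix.of_apply]
    refine Finset.sum_congr rfl fun y _ => Finset.sum_congr rfl fun y' _ => ?_
    rw [Finset.sum_mul]
    rw [sum_split]
    refine Finset.sum_congr rfl fun xa _ => Finset.sum_congr rfl fun p _ => ?_
    rw [Finset.sum_mul, sum_split]
  simp only [htr]
  simp only [Gm, Finset.mul_sum]
  -- reorder the seven nested sums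
  conv_lhs => enter [2, m, 2, y, 2, y', 2, xa, 2, p]; rw [Finset.sum_comm]
  conv_lhs => enter [2, m, 2, y, 2, y']; rw [Finset.sum_comm]
  conv_lhs => enter [2, m, 2, y, 2, y', 2, p]; rw [Finset.sum_comm]
  conv_lhs => enter [2, m, 2, y]; rw [Finset.sum_comm]
  conv_lhs => enter [2, m, 2, y, 2, p]; rw [Finset.sum_comm]
  conv_lhs => enter [2, m]; rw [Finset.sum_comm]
  conv_lhs => enter [2, m, 2, p]; rw [Finset.sum_comm]
  conv_lhs => rw [Finset.sum_comm]
  conv_lhs => enter [2, p]; rw [Finset.sum_comm]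
  refine Finset.sum_congr rfl fun p _ => Finset.sum_congr rfl fun q _ => ?_
  refine Finset.sum_congr rfl fun m _ => Finset.sum_congr rfl fun y _ => ?_
  refine Finset.sum_congr rfl fun y' _ => Finset.sum_congr rfl fun xa _ => ?_
  refine Finset.sum_congr rfl fun xa' _ => ?_
  ring

/-- Entrywise re-indexing of a matrix on `H^{⊗ℓ}` by a permutation of the factors. -/
def cper {ι : Type*} {ℓ : ℕ} (π : Equiv.Perm (Fin ℓ))
    (X : Matrix (Fin ℓ → ι) (Fin ℓ → ι) ℂ) : Matrix (Fin ℓ → ι) (Fin ℓ → ι) ℂ :=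
  Matrix.of fun v w => X (fun i => v (π i)) (fun i => w (π i))

lemma one_sub_cper {ι : Type*} {ℓ : ℕ} (π : Equiv.Perm (Fin ℓ))
    (X : Matrix (Fin ℓ → ι) (Fin ℓ → ι) ℂ) :
    (1 : Matrix (Fin ℓ → ι) (Fin ℓ → ι) ℂ) - cper π X = cper π (1 - X) := by
  ext v w
  have hiff : ((fun i => v (π i)) = fun i => w (π i)) ↔ v = w :=
    ⟨fun h => funext fun i => by simpa using congrFun h (π.symm i), fun h => by rw [h]⟩
  simp [cper, Matrix.sub_apply, Matrix.one_apply, hiff]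

lemma Gm_perm (N : Matrix (a × j) (a × j) ℂ → Matrix b b ℂ) (ℓ M : ℕ)
    (ρ : Fin M → Matrix (Fin ℓ → a) (Fin ℓ → a) ℂ)
    (D : Fin M → Matrix (Fin ℓ → b) (Fin ℓ → b) ℂ)
    (π : Equiv.Perm (Fin ℓ)) (p q : Fin ℓ → j) :
    Gm N ℓ M (fun m => cper π (ρ m)) (fun m => cper π (D m)) p q
      = Gm N ℓ M ρ D (fun i => p (π i)) (fun i => q (π i)) := by
  unfold Gm
  simp only [one_sub_cper]
  refine Finset.sum_congr rfl fun m _ => ?_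
  refine Fintype.sum_equiv (preE π) _ _ fun y => ?_
  refine Fintype.sum_equiv (preE π) _ _ fun y' => ?_
  refine Fintype.sum_equiv (preE π) _ _ fun xa => ?_
  refine Fintype.sum_equiv (preE π) _ _ fun xa' => ?_
  simp only [preE, Equiv.coe_fn_mk, cper, Matrix.of_apply]
  rw [← Equiv.prod_comp π
    (fun i => N (Matrix.single (xa i, p i) (xa' i, q i) 1) (y i) (y' i))]

lemma pairState_psd {ℓ : ℕ} {ρ : Matrix (Fin ℓ → a) (Fin ℓ → a) ℂ}
    {τ : Matrix (Fin ℓ → j) (Fin ℓ → j) ℂ} (hρ : ρ.PosSemidef) (hτ : τ.PosSemidef) :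
    (pairState ρ τ).PosSemidef :=
  psd_entry_mul (hρ.submatrix fun (u : Fin ℓ → a × j) i => (u i).1)
    (hτ.submatrix fun (u : Fin ℓ → a × j) i => (u i).2)

lemma tpow_psd {ℓ : ℕ} {N : Matrix (a × j) (a × j) ℂ → Matrix b b ℂ}
    (hN : (choiMat N).PosSemidef) {X : Matrix (Fin ℓ → a × j) (Fin ℓ → a × j) ℂ}
    (hX : X.PosSemidef) : (tpow N ℓ X).PosSemidef := by
  have hK := psd_entry_prod (Finset.univ : Finset (Fin ℓ))
    (fun i => (choiMat N).submatrix
      (fun u : (Fin ℓ → a × j) × (Fin ℓ → b) => (u.1 i, u.2 i))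
      (fun u : (Fin ℓ → a × j) × (Fin ℓ → b) => (u.1 i, u.2 i)))
    (fun i => hN.submatrix _)
  exact kernel_psd hK hX

lemma Fc_re_nonneg (N : Matrix (a × j) (a × j) ℂ → Matrix b b ℂ) (hN : IsCPTP N)
    (ℓ M : ℕ) (ρ : Fin M → Matrix (Fin ℓ → a) (Fin ℓ → a) ℂ)
    (hρ : ∀ m, (ρ m).PosSemidef)
    (D : Fin M → Matrix (Fin ℓ → b) (Fin ℓ → b) ℂ) (hD : ∀ m, (D m).PosSemidef)
    (hDd : ∀ v : Fin ℓ → b, (∑ m, D m) v v = 1)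
    (hDo : ∀ v w : Fin ℓ → b, v ≠ w → (∑ m, D m) v w = 0)
    {τ : Matrix (Fin ℓ → j) (Fin ℓ → j) ℂ} (hτ : τ.PosSemidef) :
    0 ≤ (∑ m, ((tpow N ℓ (pairState (ρ m) τ) * (1 - D m)).trace)).re := by
  rw [Complex.re_sum]
  refine Finset.sum_nonneg fun m _ => ?_
  have hE : ((1 : Matrix (Fin ℓ → b) (Fin ℓ → b) ℂ) - D m).PosSemidef := by
    have hsum1 : (∑ k, D k) = (1 : Matrix (Fin ℓ → b) (Fin ℓ → b) ℂ) := by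
      ext v w
      by_cases h : v = w
      · subst h; rw [hDd v, Matrix.one_apply_eq]
      · rw [hDo v w h, Matrix.one_apply_ne h]
    have h1 : (1 : Matrix (Fin ℓ → b) (Fin ℓ → b) ℂ) - D m
        = ∑ k ∈ Finset.univ.erase m, D k := by
      rw [Finset.sum_erase_eq_sub (Finset.mem_univ m), hsum1]
    rw [h1]; exact psd_sum _ _ fun k _ => hD k
  exact psd_trace_mul_re_nonneg (tpow_psd hN.1.2 (pairState_psd (hρ m) hτ)) hE

lemma iid_integrable {ℓ : ℕ} (μ : Measure {σ : Matrix j j ℂ // IsState σ})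
    [IsProbabilityMeasure μ] (p q : Fin ℓ → j) :
    Integrable (fun σ : {σ : Matrix j j ℂ // IsState σ} =>
      iidState ℓ (σ : Matrix j j ℂ) p q) μ := by
  have hm : Measurable (fun σ : {σ : Matrix j j ℂ // IsState σ} =>
      iidState ℓ (σ : Matrix j j ℂ) p q) := by
    show Measurable fun σ : {σ : Matrix j j ℂ // IsState σ} => ∏ i, σ.val (p i) (q i)
    refine Finset.measurable_prod _ fun i _ => ?_
    have h1 : Measurable (fun σ : {σ : Matrix j j ℂ // IsState σ} => σ.val) :=
      measurable_subtype_coe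
    exact (measurable_pi_apply (q i)).comp ((measurable_pi_apply (p i)).comp h1)
  refine (integrable_const (1 : ℝ)).mono' hm.aestronglyMeasurable ?_
  filter_upwards with σ
  show ‖∏ i, σ.val (p i) (q i)‖ ≤ 1
  rw [norm_prod]
  refine Finset.prod_le_one (fun i _ => norm_nonneg _) fun i _ => ?_
  exact state_entry_norm_le_one σ.2.1 σ.2.2 _ _


end Aux

/-- assuming the de Finetti reduction, a code with error ≤ ε against all
i.i.d. jammer states `σ^{⊗ℓ}` yields, after uniform random permutation, a random code
with error ≤ (ℓ+1)^{|J|²} ε against every jammer state `ζ` on `J^{⊗ℓ}`. -/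
theorem stmt5 {a j b : Type} [Fintype a] [DecidableEq a] [Fintype j] [DecidableEq j]
    [Fintype b] [DecidableEq b]
    (N : Matrix (a × j) (a × j) ℂ → Matrix b b ℂ) (hN : IsCPTP N)
    (ℓ M : ℕ) (hM : 0 < M)
    (ρ : Fin M → Matrix (Fin ℓ → a) (Fin ℓ → a) ℂ) (hρ : ∀ m, IsState (ρ m))
    (D : Fin M → Matrix (Fin ℓ → b) (Fin ℓ → b) ℂ)
    (hD : ∀ m, (D m).PosSemidef) (hDsum : ∑ m, D m = 1)
    (ε : ℝ)
    (μ : Measure {σ : Matrix j j ℂ // IsState σ}) (hμ : IsProbabilityMeasure μ)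
    (hdF : ∀ ζ' : Matrix (Fin ℓ → j) (Fin ℓ → j) ℂ, IsState ζ' →
      (∀ π : Equiv.Perm (Fin ℓ), permU j ℓ π * ζ' * (permU j ℓ π)ᴴ = ζ') →
      ((((ℓ : ℝ) + 1) ^ (Fintype.card j ^ 2)) •
          Matrix.of (fun u v => ∫ σ, iidState ℓ (σ : Matrix j j ℂ) u v ∂μ)
        - ζ').PosSemidef)
    (hcode : ∀ σ : Matrix j j ℂ, IsState σ → Perr N ℓ M ρ D (iidState ℓ σ) ≤ ε) :
    ∀ ζ : Matrix (Fin ℓ → j) (Fin ℓ → j) ℂ, IsState ζ →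
      (ℓ.factorial : ℝ)⁻¹ * ∑ π : Equiv.Perm (Fin ℓ),
          Perr N ℓ M (fun m => permU a ℓ π * ρ m * (permU a ℓ π)ᴴ)
                     (fun m => permU b ℓ π * D m * (permU b ℓ π)ᴴ) ζ
        ≤ ((ℓ : ℝ) + 1) ^ (Fintype.card j ^ 2) * ε := by
  intro ζ hζ
  classical
  have hM0 : (0:ℝ) < (M:ℝ) := by exact_mod_cast hM
  have hfac0 : ((ℓ.factorial : ℂ)) ≠ 0 := by
    exact_mod_cast Nat.factorial_ne_zero ℓ
  have hc0 : (0:ℝ) ≤ ((ℓ : ℝ) + 1) ^ (Fintype.card j ^ 2) := by positivity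
  set G : (Fin ℓ → j) → (Fin ℓ → j) → ℂ := Gm N ℓ M ρ D with hGdef
  set ζbar : Matrix (Fin ℓ → j) (Fin ℓ → j) ℂ :=
    Matrix.of fun v w => (ℓ.factorial : ℂ)⁻¹ * ∑ π : Equiv.Perm (Fin ℓ),
      ζ (fun i => v (π i)) (fun i => w (π i)) with hzb
  -- Step 1: covariance under permutations
  have hcov : ∀ π : Equiv.Perm (Fin ℓ),
      Perr N ℓ M (fun m => permU a ℓ π * ρ m * (permU a ℓ π)ᴴ)
                 (fun m => permU b ℓ π * D m * (permU b ℓ π)ᴴ) ζ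
      = (M:ℝ)⁻¹ * (∑ p : Fin ℓ → j, ∑ q : Fin ℓ → j,
          ζ (fun i => p (π.symm i)) (fun i => q (π.symm i)) * G p q).re := by
    intro π
    have hρπ : (fun m => permU a ℓ π * ρ m * (permU a ℓ π)ᴴ)
        = fun m => cper π (ρ m) := funext fun m => permU_conj π (ρ m)
    have hDπ : (fun m => permU b ℓ π * D m * (permU b ℓ π)ᴴ)
        = fun m => cper π (D m) := funext fun m => permU_conj π (D m)
    rw [hρπ, hDπ, Perr, ← Complex.re_sum, Fc_eq]
    congr 2
    simp only [Gm_perm, hGdef]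
    refine Fintype.sum_equiv (preE π) _ _ fun p => ?_
    refine Fintype.sum_equiv (preE π) _ _ fun q => ?_
    simp [preE]
  -- Step 2: averaging
  have hA : (ℓ.factorial : ℝ)⁻¹ * ∑ π : Equiv.Perm (Fin ℓ),
      Perr N ℓ M (fun m => permU a ℓ π * ρ m * (permU a ℓ π)ᴴ)
                 (fun m => permU b ℓ π * D m * (permU b ℓ π)ᴴ) ζ
      = (M:ℝ)⁻¹ * (∑ p : Fin ℓ → j, ∑ q : Fin ℓ → j, ζbar p q * G p q).re := by
    have hsum : ∑ p : Fin ℓ → j, ∑ q : Fin ℓ → j, ζbar p q * G p q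
        = (ℓ.factorial : ℂ)⁻¹ * ∑ π : Equiv.Perm (Fin ℓ), ∑ p : Fin ℓ → j, ∑ q : Fin ℓ → j,
            ζ (fun i => p (π.symm i)) (fun i => q (π.symm i)) * G p q := by
      calc ∑ p : Fin ℓ → j, ∑ q : Fin ℓ → j, ζbar p q * G p q
          = (ℓ.factorial : ℂ)⁻¹ * ∑ p : Fin ℓ → j, ∑ q : Fin ℓ → j,
              (∑ π : Equiv.Perm (Fin ℓ), ζ (fun i => p (π i)) (fun i => q (π i))) * G p q := by
            simp only [hzb, Matrix.of_apply]
            rw [Finset.mul_sum]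
            refine Finset.sum_congr rfl fun p _ => ?_
            rw [Finset.mul_sum]
            refine Finset.sum_congr rfl fun q _ => ?_
            ring
        _ = (ℓ.factorial : ℂ)⁻¹ * ∑ π : Equiv.Perm (Fin ℓ), ∑ p : Fin ℓ → j, ∑ q : Fin ℓ → j,
              ζ (fun i => p (π i)) (fun i => q (π i)) * G p q := by
            congr 1
            simp only [Finset.sum_mul]
            conv_lhs => enter [2, p]; rw [Finset.sum_comm]
            rw [Finset.sum_comm]
        _ = (ℓ.factorial : ℂ)⁻¹ * ∑ π : Equiv.Perm (Fin ℓ), ∑ p : Fin ℓ → j, ∑ q : Fin ℓ → j,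
              ζ (fun i => p (π.symm i)) (fun i => q (π.symm i)) * G p q := by
            congr 1
            refine Fintype.sum_equiv (Equiv.inv (Equiv.Perm (Fin ℓ))) _ _ fun π => ?_
            simp only [Equiv.inv_apply, Equiv.Perm.inv_def, Equiv.symm_symm]
    have h1 : ∑ π : Equiv.Perm (Fin ℓ),
        Perr N ℓ M (fun m => permU a ℓ π * ρ m * (permU a ℓ π)ᴴ)
                   (fun m => permU b ℓ π * D m * (permU b ℓ π)ᴴ) ζ
        = ∑ π : Equiv.Perm (Fin ℓ), (M:ℝ)⁻¹ * (∑ p : Fin ℓ → j, ∑ q : Fin ℓ → j,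
            ζ (fun i => p (π.symm i)) (fun i => q (π.symm i)) * G p q).re :=
      Finset.sum_congr rfl fun π _ => hcov π
    rw [h1, ← Finset.mul_sum, hsum]
    rw [show ((ℓ.factorial : ℂ)⁻¹ = (((ℓ.factorial : ℝ)⁻¹ : ℝ) : ℂ)) from by push_cast; ring]
    rw [Complex.re_ofReal_mul, Complex.re_sum]
    ring
  -- Step 3: ζbar is a permutation-invariant state
  have hbpsd : ζbar.PosSemidef := by
    have h1 : ζbar = (((ℓ.factorial : ℝ)⁻¹ : ℝ) : ℂ) • ∑ π : Equiv.Perm (Fin ℓ), cper π ζ := by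
      ext v w
      simp only [hzb, Matrix.of_apply, Matrix.smul_apply, Matrix.sum_apply, smul_eq_mul, cper]
      rw [Complex.ofReal_inv, Complex.ofReal_natCast]
    rw [h1]
    exact psd_csmul (psd_sum _ _ fun π _ =>
      hζ.1.submatrix (fun (v : Fin ℓ → j) (i : Fin ℓ) => v (π i))) (by positivity)
  have hbtr : ζbar.trace = 1 := by
    rw [Matrix.trace]
    simp only [Matrix.diag_apply, hzb, Matrix.of_apply]
    rw [← Finset.mul_sum, Finset.sum_comm]
    have hv : ∀ π : Equiv.Perm (Fin ℓ),
        ∑ v : Fin ℓ → j, ζ (fun i => v (π i)) (fun i => v (π i)) = 1 := by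
      intro π
      have h2 : ∑ v : Fin ℓ → j, ζ (fun i => v (π i)) (fun i => v (π i))
          = ∑ v : Fin ℓ → j, ζ v v := Equiv.sum_comp (preE π) (fun v => ζ v v)
      rw [h2]
      simpa [Matrix.trace, Matrix.diag] using hζ.2
    simp only [hv]
    rw [Finset.sum_const, Finset.card_univ, Fintype.card_perm, Fintype.card_fin]
    simp [inv_mul_cancel₀ hfac0]
  have hbinv : ∀ π : Equiv.Perm (Fin ℓ), permU j ℓ π * ζbar * (permU j ℓ π)ᴴ = ζbar := by
    intro π
    rw [permU_conj]
    ext v w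
    simp only [Matrix.of_apply, hzb]
    congr 1
    refine Fintype.sum_equiv (Equiv.mulLeft π) _ _ fun π' => ?_
    simp [Equiv.Perm.mul_apply]
  -- Step 4: de Finetti domination and monotonicity
  have hdom := hdF ζbar ⟨hbpsd, hbtr⟩ hbinv
  have hDd : ∀ v : Fin ℓ → b, (∑ m, D m) v v = 1 := by
    intro v
    have h5 := congrFun (congrFun hDsum v) v
    rwa [Matrix.one_apply_eq] at h5
  have hDo : ∀ v w : Fin ℓ → b, v ≠ w → (∑ m, D m) v w = 0 := by
    intro v w h
    have h5 := congrFun (congrFun hDsum v) w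
    rwa [Matrix.one_apply_ne h] at h5
  have hpos := Fc_re_nonneg N hN ℓ M ρ (fun m => (hρ m).1) D hD hDd hDo hdom
  rw [Fc_eq] at hpos
  have hmono : (∑ p : Fin ℓ → j, ∑ q : Fin ℓ → j, ζbar p q * G p q).re
      ≤ ((ℓ : ℝ) + 1) ^ (Fintype.card j ^ 2) *
        (∑ p : Fin ℓ → j, ∑ q : Fin ℓ → j,
          (Matrix.of fun u v => ∫ σ, iidState ℓ (σ : Matrix j j ℂ) u v ∂μ) p q * G p q).re := by
    have hexp : ∑ p : Fin ℓ → j, ∑ q : Fin ℓ → j,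
        ((((ℓ : ℝ) + 1) ^ (Fintype.card j ^ 2)) •
            Matrix.of (fun u v => ∫ σ, iidState ℓ (σ : Matrix j j ℂ) u v ∂μ) - ζbar) p q * G p q
        = ((((ℓ : ℝ) + 1) ^ (Fintype.card j ^ 2) : ℝ) : ℂ) *
            (∑ p : Fin ℓ → j, ∑ q : Fin ℓ → j,
              (Matrix.of fun u v => ∫ σ, iidState ℓ (σ : Matrix j j ℂ) u v ∂μ) p q * G p q)
          - ∑ p : Fin ℓ → j, ∑ q : Fin ℓ → j, ζbar p q * G p q := by
      simp only [Matrix.sub_apply, Matrix.smul_apply, Complex.real_smul, sub_mul,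
        Finset.sum_sub_distrib, Finset.mul_sum, mul_assoc]
    rw [hexp] at hpos
    rw [Complex.sub_re, Complex.re_ofReal_mul] at hpos
    linarith
  -- Step 5: the integral bound
  have hintg : ∀ p q : Fin ℓ → j, Integrable
      (fun σ : {σ : Matrix j j ℂ // IsState σ} => iidState ℓ (σ : Matrix j j ℂ) p q * G p q) μ :=
    fun p q => (iid_integrable μ p q).mul_const _
  have hswap : ∑ p : Fin ℓ → j, ∑ q : Fin ℓ → j,
      (Matrix.of fun u v => ∫ σ, iidState ℓ (σ : Matrix j j ℂ) u v ∂μ) p q * G p q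
      = ∫ σ, (∑ p : Fin ℓ → j, ∑ q : Fin ℓ → j,
          iidState ℓ (σ : Matrix j j ℂ) p q * G p q) ∂μ := by
    rw [integral_finset_sum _ fun p _ => integrable_finset_sum _ fun q _ => hintg p q]
    refine Finset.sum_congr rfl fun p _ => ?_
    rw [integral_finset_sum _ fun q _ => hintg p q]
    refine Finset.sum_congr rfl fun q _ => ?_
    simp only [Matrix.of_apply]
    rw [← integral_mul_const]
  have hintF : Integrable (fun σ : {σ : Matrix j j ℂ // IsState σ} =>
      ∑ p : Fin ℓ → j, ∑ q : Fin ℓ → j, iidState ℓ (σ : Matrix j j ℂ) p q * G p q) μ :=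
    integrable_finset_sum _ fun p _ => integrable_finset_sum _ fun q _ => hintg p q
  have hbound : (∑ p : Fin ℓ → j, ∑ q : Fin ℓ → j,
      (Matrix.of fun u v => ∫ σ, iidState ℓ (σ : Matrix j j ℂ) u v ∂μ) p q * G p q).re
      ≤ (M:ℝ) * ε := by
    have hre := integral_re hintF
    simp only [RCLike.re_to_complex] at hre
    rw [hswap, ← hre]
    have hintre : Integrable (fun σ : {σ : Matrix j j ℂ // IsState σ} =>
        (∑ p : Fin ℓ → j, ∑ q : Fin ℓ → j,
          iidState ℓ (σ : Matrix j j ℂ) p q * G p q).re) μ := by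
      simpa [RCLike.re_to_complex] using hintF.re
    have hpt : ∀ σ : {σ : Matrix j j ℂ // IsState σ},
        (∑ p : Fin ℓ → j, ∑ q : Fin ℓ → j,
          iidState ℓ (σ : Matrix j j ℂ) p q * G p q).re ≤ (M:ℝ) * ε := by
      intro σ
      have h3 := hcode σ.1 σ.2
      rw [Perr, ← Complex.re_sum, Fc_eq] at h3
      have h4 := mul_le_mul_of_nonneg_left h3 hM0.le
      rwa [← mul_assoc, mul_inv_cancel₀ hM0.ne', one_mul] at h4
    calc ∫ σ, (∑ p : Fin ℓ → j, ∑ q : Fin ℓ → j,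
          iidState ℓ (σ : Matrix j j ℂ) p q * G p q).re ∂μ
        ≤ ∫ _, (M:ℝ) * ε ∂μ := integral_mono hintre (integrable_const _) hpt
      _ = (M:ℝ) * ε := by simp
  -- Combine everything
  rw [hA]
  calc (M:ℝ)⁻¹ * (∑ p : Fin ℓ → j, ∑ q : Fin ℓ → j, ζbar p q * G p q).re
      ≤ (M:ℝ)⁻¹ * (((ℓ : ℝ) + 1) ^ (Fintype.card j ^ 2) * ((M:ℝ) * ε)) := by
        refine mul_le_mul_of_nonneg_left ?_ (inv_nonneg.2 hM0.le)
        exact le_trans hmono (mul_le_mul_of_nonneg_left hbound hc0)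
    _ = ((ℓ : ℝ) + 1) ^ (Fintype.card j ^ 2) * ε := by
        field_simp
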